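/- #U(𝔽₇) = 340, where U(𝔽₇) = { (x₀:…:x₅) ∈ P⁵(𝔽₇) : x₀+⋯+x₅ = 0, x₀⁻¹+⋯+x₅⁻¹ = 0, all xᵢ ≠ 0 }. -/

import Mathlib

instance : Fact (Nat.Prime 7) := ⟨by norm_num⟩

/-- The open part of the Barth–Nieto quintic in `ℙ⁵(𝔽_7)`: all coordinates nonzero,
`Σ xᵢ = 0` and `Σ xᵢ⁻¹ = 0`. -/
def barthNietoU : Set (Projectivization (ZMod 7) (Fin 6 → ZMod 7)) :=
  {x | (∀ i, x.rep i ≠ 0) ∧ (∑ i, x.rep i) = 0 ∧ (∑ i, (x.rep i)⁻¹) = 0}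

/-!
Every point of `U` has `x₀ ≠ 0`, hence a unique representative with `x₀ = 1`, and the defining
conditions are invariant under scaling. So `U` is in bijection with the solutions
`(x₁, …, x₅) ∈ 𝔽₇⁵` of the affine equations `1 + Σ xᵢ = 0`, `1 + Σ xᵢ⁻¹ = 0`, `xᵢ ≠ 0`, which
are counted by evaluating all `7⁵` tuples, with `x⁻¹ = x⁵` making the inverse computable.
-/

namespace Projectivization

variable {K V : Type*} [DivisionRing K] [AddCommGroup V] [Module K V]

theorem rep_mk_iff_of_smul_iff {p : V → Prop} (hp : ∀ (c : Kˣ) v, p (c • v) ↔ p v) {v : V}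
    (hv : v ≠ 0) : p (mk K v hv).rep ↔ p v := by
  obtain ⟨c, hc⟩ := exists_smul_eq_mk_rep K v hv
  rw [← hc, hp]

theorem ncard_setOf_rep_eq_ncard_affineChart {n : ℕ} {p : (Fin (n + 1) → K) → Prop}
    (hp : ∀ (c : Kˣ) v, p (c • v) ↔ p v) (hp₀ : ∀ v, p v → v 0 ≠ 0) :
    {x : Projectivization K (Fin (n + 1) → K) | p x.rep}.ncard =
      {v : Fin n → K | p (Fin.cons 1 v)}.ncard := by
  have cons_ne_zero (v : Fin n → K) : (Fin.cons 1 v : Fin (n + 1) → K) ≠ 0 :=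
    fun h => one_ne_zero (congrFun h 0)
  symm
  refine Set.ncard_congr (fun v _ => mk K _ (cons_ne_zero v)) ?_ ?_ ?_
  · intro v hv
    exact (rep_mk_iff_of_smul_iff hp _).2 hv
  · intro v w _ _ h
    obtain ⟨c, hc⟩ := (mk_eq_mk_iff K _ _ (cons_ne_zero v) (cons_ne_zero w)).1 h
    have hc₁ : (c : K) = 1 := by simpa [Units.smul_def] using congrFun hc 0
    simpa [Units.smul_def, hc₁] using (congrArg Fin.tail hc).symm
  · intro x hx
    have h₀ : x.rep 0 ≠ 0 := hp₀ _ hx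
    obtain ⟨w, hw⟩ : ∃ w, w = (x.rep 0)⁻¹ • x.rep := ⟨_, rfl⟩
    have hw_cons : Fin.cons 1 (Fin.tail w) = w := by
      rw [← inv_mul_cancel₀ h₀, ← smul_eq_mul, ← Pi.smul_apply, ← hw, Fin.cons_self_tail]
    refine ⟨Fin.tail w, ?_, ?_⟩
    · rw [Set.mem_ofPred_eq, hw_cons, hw]
      exact (hp (Units.mk0 _ (inv_ne_zero h₀)) _).2 hx
    · conv_rhs => rw [← mk_rep x]
      exact (mk_eq_mk_iff K _ _ _ _).2 ⟨Units.mk0 _ (inv_ne_zero h₀), by rw [hw_cons, hw]; rfl⟩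

end Projectivization

theorem FiniteField.inv_eq_pow_card_sub_two {K : Type*} [Field K] [Fintype K]
    (hK : 2 < Fintype.card K) (x : K) : x⁻¹ = x ^ (Fintype.card K - 2) := by
  rcases eq_or_ne x 0 with rfl | hx
  · rw [inv_zero, zero_pow (by omega)]
  · rw [eq_comm, ← mul_eq_one_iff_eq_inv₀ hx, ← pow_succ,
      show Fintype.card K - 2 + 1 = Fintype.card K - 1 by omega,
      FiniteField.pow_card_sub_one_eq_one x hx]

theorem Fin.sum_univ_fun_succ {M α : Type*} [AddCommMonoid M] [Fintype α] {n : ℕ}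
    (f : (Fin (n + 1) → α) → M) : ∑ v, f v = ∑ a, ∑ v : Fin n → α, f (Fin.cons a v) := by
  rw [← (Fin.consEquiv fun _ => α).sum_comp, Fintype.sum_prod_type]
  rfl

def IsBarthNieto {K ι : Type*} [Field K] [Fintype ι] (w : ι → K) : Prop :=
  (∀ i, w i ≠ 0) ∧ ∑ i, w i = 0 ∧ ∑ i, (w i)⁻¹ = 0

theorem isBarthNieto_units_smul_iff {K ι : Type*} [Field K] [Fintype ι] (c : Kˣ) (w : ι → K) :
    IsBarthNieto (c • w) ↔ IsBarthNieto w := by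
  simp only [IsBarthNieto, Pi.smul_apply, Units.smul_def, smul_eq_mul, mul_inv, ← Finset.mul_sum,
    ne_eq, mul_eq_zero, inv_eq_zero, c.ne_zero, false_or]

theorem ncard_isBarthNieto_cons_one_zmod_seven :
    {v : Fin 5 → ZMod 7 | IsBarthNieto (Fin.cons 1 v : Fin 6 → ZMod 7)}.ncard = 340 := by
  have inv_eq (x : ZMod 7) : x⁻¹ = x ^ 5 := by
    simpa using FiniteField.inv_eq_pow_card_sub_two (by simp) x
  classical
  rw [Set.ncard_eq_toFinset_card', Set.toFinset_ofPred, Finset.card_filter]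
  simp only [Fin.sum_univ_fun_succ, Fintype.sum_unique, IsBarthNieto, Fin.sum_univ_succ,
    Fin.forall_fin_succ, Fin.cons_zero, Fin.cons_succ, inv_eq]
  decide

/-- `#U(𝔽_7) = 340`. -/
theorem card_barthNietoU : barthNietoU.ncard = 340 := by
  have hU : barthNietoU = {x | IsBarthNieto x.rep} := rfl
  rw [hU, Projectivization.ncard_setOf_rep_eq_ncard_affineChart isBarthNieto_units_smul_iff
    fun _ h => h.1 0]
  exact ncard_isBarthNieto_cons_one_zmod_seven
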